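/- arXiv:2407.16072 — 2 statements merged into one kernel-verified Lean document; each statement's English description precedes it below -/
import Mathlib

section
/- Let d be coprime to p^n − 1 and W_d(a) = ∑_{x ∈ F_{p^n}} ω^{Tr(x^d − ax)}. Then for any positive integer l, ∑_{a ∈ F_{p^n}} W_d(a)^l = (p^{2n} N^{(l)} − p^{ln})/(p^n − 1), where N^{(l)} is the number of l-tuples (x_1,…,x_l) ∈ F_{p^n}^l satisfying x_1 + ⋯ + x_l = 0 and x_1^d + ⋯ + x_l^d = 0. -/
/-! Expanding the `l`-th power and summing over `a` first, orthogonality of the primitive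
character `ψ = ω ^ Tr(·)` gives `∑ₐ W_d(a)^l = q T` with `T = ∑ ψ(x₁^d + ⋯ + x_l^d)` over the
hyperplane `x₁ + ⋯ + x_l = 0`, which has `q^(l-1)` points. Scaling by `c ≠ 0` preserves the
hyperplane and multiplies the power sum by `c^d`; as `c ↦ c^d` permutes `Fˣ`, averaging `T` over
`c ∈ Fˣ` and using orthogonality again gives `(q - 1) T = q N^(l) - q^(l-1)`. -/

noncomputable instance (p n : ℕ) [Fact p.Prime] : Fintype (GaloisField p n) :=
  Fintype.ofFinite _

/-- `ω = exp(2πi/p)` raised to (the integer lift of) an element of `F_p`. -/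
noncomputable def ew (p : ℕ) (x : ZMod p) : ℂ :=
  Complex.exp (2 * Real.pi * Complex.I / p) ^ x.val

/-- The absolute trace from `F_{p^n}` to `F_p`. -/
noncomputable def Tr (p n : ℕ) [Fact p.Prime] (x : GaloisField p n) : ZMod p :=
  Algebra.trace (ZMod p) (GaloisField p n) x

open Finset

namespace AddChar

variable {M : Type*} [CommMonoid M]

lemma map_sum_eq_prod {A ι : Type*} [AddCommMonoid A] (ψ : AddChar A M) (s : Finset ι)
    (g : ι → A) : ψ (∑ i ∈ s, g i) = ∏ i ∈ s, ψ (g i) := by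
  classical
  induction s using Finset.induction_on with
  | empty => simp
  | insert _ _ h ih => rw [sum_insert h, prod_insert h, ψ.map_add_eq_mul, ih]

lemma IsPrimitive.compAddMonoidHom_trace {K L : Type*} [Field K] [Field L] [Algebra K L]
    [FiniteDimensional K L] [Algebra.IsSeparable K L] {ψ : AddChar K M} (hψ : ψ.IsPrimitive) :
    (ψ.compAddMonoidHom (Algebra.trace K L).toAddMonoidHom).IsPrimitive := by
  refine IsPrimitive.of_ne_one fun h => hψ one_ne_zero ?_
  ext a
  obtain ⟨b, rfl⟩ := Algebra.trace_surjective K L a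
  simpa using DFunLike.congr_fun h b

end AddChar

lemma sum_units_add_apply_zero {G M : Type*} [GroupWithZero G] [Fintype G] [DecidableEq G]
    [AddCommMonoid M] (g : G → M) : ∑ c : Gˣ, g c + g 0 = ∑ c, g c := by
  rw [← sum_erase_add _ _ (mem_univ (0 : G))]
  congr 1
  refine sum_bij (fun c _ => (c : G)) (fun c _ => by simp) (fun _ _ _ _ => Units.ext)
    (fun c hc => ⟨Units.mk0 c (ne_of_mem_erase hc), mem_univ _, rfl⟩) (fun _ _ => rfl)

lemma card_filter_sum_eq_zero {G : Type*} [AddCommGroup G] [Fintype G] [DecidableEq G]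
    (m : ℕ) : #{x : Fin (m + 1) → G | ∑ i, x i = 0} = Fintype.card G ^ m := by
  rw [show Fintype.card G ^ m = #(univ : Finset (Fin m → G)) by simp]
  refine card_nbij' Fin.tail (fun y => Fin.cons (-∑ i, y i) y) (fun _ _ => mem_univ _)
    (fun y _ => by simp) (fun x hx => ?_) (fun y _ => Fin.tail_cons _ _)
  have hx : x 0 + ∑ i, Fin.tail x i = 0 :=
    (by simpa [Fin.sum_univ_succ] using hx : x 0 + ∑ i : Fin m, x i.succ = 0)
  simp only [← eq_neg_of_add_eq_zero_left hx, Fin.cons_self_tail]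

lemma sum_filter_sum_eq_zero_smul {F M ι : Type*} [Field F] [Fintype F] [DecidableEq F]
    [Fintype ι] [DecidableEq ι] [AddCommMonoid M] {c : F} (hc : c ≠ 0) (g : (ι → F) → M) :
    ∑ x with ∑ i, x i = 0, g (c • x) = ∑ x with ∑ i, x i = 0, g x := by
  rw [sum_filter, sum_filter]
  refine Fintype.sum_equiv (MulAction.toPerm (Units.mk0 c hc)) _ _ fun x => ?_
  simp [← mul_sum, hc]

section WalshMoments

variable {F R : Type*} [Field F] [Fintype F] [DecidableEq F] [CommRing R] [IsDomain R]
  {ψ : AddChar F R}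

theorem sum_walsh_pow_eq (hψ : ψ.IsPrimitive) (f : F → F) (l : ℕ) :
    ∑ a, (∑ x, ψ (f x - a * x)) ^ l
      = Fintype.card F * ∑ x : Fin l → F with ∑ i, x i = 0, ψ (∑ i, f (x i)) := by
  calc ∑ a, (∑ x, ψ (f x - a * x)) ^ l
      = ∑ x : Fin l → F, ψ (∑ i, f (x i)) * ∑ a, ψ (a * -∑ i, x i) := by
        have hsplit : ∀ a (x : Fin l → F),
            ∏ i, ψ (f (x i) - a * x i) = ψ (∑ i, f (x i)) * ψ (a * -∑ i, x i) := by
          intro a x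
          rw [← AddChar.map_sum_eq_prod, ← AddChar.map_add_eq_mul, sum_sub_distrib, ← mul_sum,
            mul_neg, sub_eq_add_neg]
        simp_rw [Fintype.sum_pow, hsplit, mul_sum]
        exact sum_comm
    _ = ∑ x : Fin l → F, if ∑ i, x i = 0 then Fintype.card F * ψ (∑ i, f (x i)) else 0 := by
        simp_rw [AddChar.sum_mulShift _ hψ, Nat.cast_ite, Nat.cast_zero, neg_eq_zero, mul_ite,
          mul_zero, mul_comm]
    _ = _ := by rw [← sum_filter, mul_sum]

variable {d : ℕ}

theorem sub_one_mul_sum_filter_sum_eq_zero (hψ : ψ.IsPrimitive) (hd : (Nat.card Fˣ).Coprime d)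
    (l : ℕ) :
    ((Fintype.card F : R) - 1) * ∑ x : Fin l → F with ∑ i, x i = 0, ψ (∑ i, x i ^ d)
      = Fintype.card F * #{x : Fin l → F | ∑ i, x i = 0 ∧ ∑ i, x i ^ d = 0}
        - #{x : Fin l → F | ∑ i, x i = 0} := by
  have sum_units_pow : ∀ s : F,
      ∑ c : Fˣ, ψ ((c : F) ^ d * s) = (if s = 0 then (Fintype.card F : R) else 0) - 1 := by
    intro s
    have hall := AddChar.sum_mulShift s hψ
    push_cast at hall
    rw [eq_sub_iff_add_eq, ← hall, ← sum_units_add_apply_zero fun c => ψ (c * s), zero_mul,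
      AddChar.map_zero_eq_one]
    simpa [Units.val_pow_eq_pow_val] using
      (powCoprime hd).sum_comp fun c : Fˣ => ψ ((c : F) * s)
  calc ((Fintype.card F : R) - 1) * ∑ x : Fin l → F with ∑ i, x i = 0, ψ (∑ i, x i ^ d)
      = ∑ c : Fˣ, ∑ x : Fin l → F with ∑ i, x i = 0, ψ ((c : F) ^ d * ∑ i, x i ^ d) := by
        rw [← Nat.cast_one, ← Nat.cast_sub Fintype.card_pos, ← Fintype.card_units, ← nsmul_eq_mul,
          ← card_univ, ← sum_const]
        refine sum_congr rfl fun c _ => ?_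
        rw [← sum_filter_sum_eq_zero_smul c.ne_zero]
        simp_rw [Pi.smul_apply, smul_eq_mul, mul_pow, mul_sum]
    _ = ∑ x : Fin l → F with ∑ i, x i = 0,
          ((if ∑ i, x i ^ d = 0 then (Fintype.card F : R) else 0) - 1) := by
        rw [sum_comm]
        simp_rw [sum_units_pow]
    _ = _ := by
        rw [sum_sub_distrib, sum_ite, sum_const_zero, add_zero, sum_const, sum_const, filter_filter,
          nsmul_eq_mul, nsmul_one, mul_comm]

theorem sub_one_mul_sum_walsh_pow (hψ : ψ.IsPrimitive) (hd : (Nat.card Fˣ).Coprime d) (m : ℕ) :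
    ((Fintype.card F : R) - 1) * ∑ a, (∑ x, ψ (x ^ d - a * x)) ^ (m + 1)
      = (Fintype.card F : R) ^ 2
          * #{x : Fin (m + 1) → F | ∑ i, x i = 0 ∧ ∑ i, x i ^ d = 0}
        - (Fintype.card F : R) ^ (m + 1) := by
  rw [sum_walsh_pow_eq hψ, mul_left_comm, sub_one_mul_sum_filter_sum_eq_zero hψ hd,
    card_filter_sum_eq_zero]
  push_cast
  ring

end WalshMoments

noncomputable def traceChar (p n : ℕ) [Fact p.Prime] : AddChar (GaloisField p n) ℂ :=
  (AddChar.zmodChar p (Complex.isPrimitiveRoot_exp p (NeZero.ne p)).pow_eq_one).compAddMonoidHom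
    (Algebra.trace (ZMod p) (GaloisField p n)).toAddMonoidHom

lemma traceChar_apply (p n : ℕ) [Fact p.Prime] (x : GaloisField p n) :
    traceChar p n x = ew p (Tr p n x) :=
  rfl

lemma isPrimitive_traceChar (p n : ℕ) [Fact p.Prime] : (traceChar p n).IsPrimitive :=
  (AddChar.zmodChar_primitive_of_primitive_root p
    (Complex.isPrimitiveRoot_exp p (NeZero.ne p))).compAddMonoidHom_trace

theorem walsh_power_moment_general (p n : ℕ) [Fact p.Prime] (hn : 1 ≤ n)
    (d : ℕ) (hgcd : Nat.gcd d (p ^ n - 1) = 1) (l : ℕ) (hl : 1 ≤ l) :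
    (∑ a : GaloisField p n,
        (∑ x : GaloisField p n, ew p (Tr p n (x ^ d - a * x))) ^ l)
      = ((p : ℂ) ^ (2 * n) *
            (Nat.card {x : Fin l → GaloisField p n //
              (∑ i, x i) = 0 ∧ (∑ i, (x i) ^ d) = 0} : ℂ)
          - (p : ℂ) ^ (l * n)) / ((p : ℂ) ^ n - 1) := by
  classical
  obtain ⟨m, rfl⟩ : ∃ m, l = m + 1 := ⟨l - 1, by omega⟩
  have hq : Fintype.card (GaloisField p n) = p ^ n := by
    rw [← Nat.card_eq_fintype_card, GaloisField.card p n (by omega)]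
  have hd : (Nat.card (GaloisField p n)ˣ).Coprime d := by
    rw [Nat.card_eq_fintype_card, Fintype.card_units, hq]
    exact Nat.coprime_comm.mp hgcd
  have hq1 : (p : ℂ) ^ n - 1 ≠ 0 := by
    rw [sub_ne_zero]
    exact_mod_cast (Nat.one_lt_pow (by omega) (Fact.out : p.Prime).one_lt).ne'
  have key := sub_one_mul_sum_walsh_pow (isPrimitive_traceChar p n) hd m
  simp only [traceChar_apply, hq, Nat.cast_pow] at key
  rw [Nat.card_eq_fintype_card, Fintype.card_subtype, eq_div_iff hq1, mul_comm, key]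
  ring

/-- The `l`-th power moment of the Walsh transform of `Tr(x^d)` in terms of the
number `N^(l)` of solutions of `x₁+⋯+x_l = 0`, `x₁^d+⋯+x_l^d = 0`. -/
theorem walsh_power_moment (p n : ℕ) [Fact p.Prime] (hn : 1 ≤ n)
    (d : ℕ) (hd : 0 < d) (hgcd : Nat.gcd d (p ^ n - 1) = 1) (l : ℕ) (hl : 1 ≤ l) :
    (∑ a : GaloisField p n,
        (∑ x : GaloisField p n, ew p (Tr p n (x ^ d - a * x))) ^ l)
      = ((p : ℂ) ^ (2 * n) *
            (Nat.card {x : Fin l → GaloisField p n //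
              (∑ i, x i) = 0 ∧ (∑ i, (x i) ^ d) = 0} : ℂ)
          - (p : ℂ) ^ (l * n)) / ((p : ℂ) ^ n - 1) :=
  walsh_power_moment_general p n hn d hgcd l hl
end

section
/- Let d be coprime to p^n − 1 with d ≡ 1 (mod p − 1), and consider the p-ary cyclic code whose codewords are c_{a,b} = (Tr(aα^t + bα^{dt}))_{t=0}^{p^n−2} for a, b ∈ F_{p^n}. Then every nonzero codeword c_{a,b} with b ≠ 0 has Hamming weight (p − 1)(p^n − W_d(c))/p for some c ∈ F_{p^n}, where W_d(c) = ∑_{x ∈ F_{p^n}} ω^{Tr(x^d − cx)}. -/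
/-!
Choose `e` with `e ^ d = b` (possible since `d` is prime to `p ^ n - 1`) and put `c = -a / e`.
For `f y = y ^ d - c * y` we get `a α^t + b α^{dt} = f (e α^t)`, and `t ↦ e α^t` enumerates
the nonzero elements, so the weight is `#{y | Tr (f y) ≠ 0}`. Because `u ^ d = u` on `F_p`, `f` is
`F_p`-homogeneous, hence `∑_y ω^{u Tr (f y)}` does not depend on `u ∈ F_p^×`; summing the
orthogonality relation over `u ∈ F_p` gives `p · #{y | Tr (f y) = 0} = p ^ n + (p - 1) W_d(c)`.
-/

open Finset

theorem ew_eq_stdAddChar (p : ℕ) [NeZero p] (x : ZMod p) : ew p x = ZMod.stdAddChar x := by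
  rw [ew, ZMod.stdAddChar_apply, ZMod.toCircle_apply, ← Complex.exp_nat_mul]
  congr 1
  ring

theorem AddChar.card_filter_ne_zero_eq_of_isPrimitive {R X : Type*} [CommRing R] [Fintype R]
    [DecidableEq R] [Fintype X] {ψ : AddChar R ℂ} (hψ : ψ.IsPrimitive) (g : X → R)
    (hinv : ∀ u : R, u ≠ 0 → ∑ x, ψ (u * g x) = ∑ x, ψ (g x)) :
    (#{x | g x ≠ 0} : ℂ)
      = (Fintype.card R - 1) * (Fintype.card X - ∑ x, ψ (g x)) / Fintype.card R := by
  have hR : (Fintype.card R : ℂ) ≠ 0 := by exact_mod_cast Fintype.card_ne_zero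
  have hzero : (Fintype.card R : ℂ) * #{x | g x = 0}
      = Fintype.card X + (Fintype.card R - 1) * ∑ x, ψ (g x) := by
    calc (Fintype.card R : ℂ) * #{x | g x = 0}
        = ∑ x, ∑ u, ψ (u * g x) := by
          simp [AddChar.sum_mulShift _ hψ, sum_ite, mul_comm]
      _ = ∑ u, ∑ x, ψ (u * g x) := sum_comm
      _ = ∑ x, ψ (0 * g x) + ∑ u ∈ univ.erase 0, ∑ x, ψ (u * g x) :=
          (add_sum_erase _ _ (mem_univ 0)).symm
      _ = Fintype.card X + (Fintype.card R - 1) * ∑ x, ψ (g x) := by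
          rw [sum_congr rfl fun u hu ↦ hinv u (ne_of_mem_erase hu), sum_const,
            card_erase_of_mem (mem_univ _), card_univ, nsmul_eq_mul,
            Nat.cast_sub Fintype.card_pos]
          simp
  have hsplit : (#{x | g x = 0} : ℂ) + #{x | g x ≠ 0} = Fintype.card X := by
    exact_mod_cast card_filter_add_card_filter_not _
  field_simp
  linear_combination (Fintype.card R : ℂ) * hsplit - hzero

theorem sum_apply_mul_comp_eq_of_map_smul {K V M : Type*} [Field K] [AddCommGroup V]
    [Module K V] [Fintype V] [AddCommMonoid M] (ψ : K → M) (T : V →ₗ[K] K) {f : V → V}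
    (hf : ∀ k : K, k ≠ 0 → ∀ y, f (k • y) = k • f y) {k : K} (hk : k ≠ 0) :
    ∑ y, ψ (k * T (f y)) = ∑ y, ψ (T (f y)) := by
  have hperm : ∀ y, k * T (f y) = T (f ((Units.mk0 k hk) • y)) := fun y ↦ by
    rw [Units.smul_mk0, hf k hk, map_smul, smul_eq_mul]
  simp only [hperm]
  exact Fintype.sum_equiv (MulAction.toPerm (Units.mk0 k hk)) _ _ fun _ ↦ rfl

theorem FiniteField.pow_eq_self_of_modEq {K : Type*} [Field K] [Fintype K] {d : ℕ}
    (hd : d ≡ 1 [MOD Fintype.card K - 1]) {u : K} (hu : u ≠ 0) : u ^ d = u := by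
  have h := FiniteField.pow_card_sub_one_eq_one u hu
  rw [pow_eq_pow_mod d h, hd, ← pow_eq_pow_mod 1 h, pow_one]

theorem FiniteField.exists_pow_eq_of_coprime {K : Type*} [Field K] [Fintype K] {d : ℕ}
    (hd : d.Coprime (Fintype.card K - 1)) (b : Kˣ) : ∃ e : Kˣ, e ^ d = b := by
  have : (Nat.card Kˣ).Coprime d := by
    rwa [Nat.card_units, Nat.card_eq_fintype_card, Nat.coprime_comm]
  exact this.pow_left_bijective.surjective b

theorem smul_pow_sub_mul {K L : Type*} [CommSemiring K] [CommRing L] [Algebra K L] {d : ℕ}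
    {k : K} (hk : k ^ d = k) (c y : L) : (k • y) ^ d - c * (k • y) = k • (y ^ d - c * y) := by
  rw [smul_pow, hk, smul_sub, mul_smul_comm]

theorem FiniteField.nat_card_mul_pow_of_orderOf_eq {K : Type*} [Field K] [Fintype K] {α : K}
    (hα : orderOf α = Fintype.card K - 1) {e : K} (he : e ≠ 0) {P : K → Prop} (hP : ¬ P 0) :
    Nat.card {t : ℕ // t < Fintype.card K - 1 ∧ P (e * α ^ t)} = Nat.card {y : K // P y} := by
  have hprim : IsPrimitiveRoot α (Fintype.card K - 1) := hα ▸ IsPrimitiveRoot.orderOf α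
  have : NeZero (Fintype.card K - 1) := ⟨by have := Fintype.one_lt_card (α := K); omega⟩
  refine Nat.card_eq_of_bijective (fun t ↦ ⟨e * α ^ t.1, t.2.2⟩) ⟨?_, ?_⟩
  · intro ⟨t, ht, _⟩ ⟨s, hs, _⟩ hts
    have h' : α ^ t = α ^ s := mul_left_cancel₀ he (congrArg Subtype.val hts)
    exact Subtype.ext <|
      pow_injOn_Iio_orderOf (by rwa [Set.mem_Iio, hα]) (by rwa [Set.mem_Iio, hα]) h'
  · rintro ⟨y, hy⟩
    have hy0 : e⁻¹ * y ≠ 0 := mul_ne_zero (inv_ne_zero he) (by rintro rfl; exact hP hy)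
    obtain ⟨t, ht, hαt⟩ :=
      hprim.eq_pow_of_pow_eq_one (FiniteField.pow_card_sub_one_eq_one _ hy0)
    have hey : e * α ^ t = y := by rw [hαt, mul_inv_cancel_left₀ he]
    exact ⟨⟨t, ht, hey ▸ hy⟩, Subtype.ext hey⟩

/-- Weights of the cyclic code with nonzeros `α^{-1}, α^{-d}`: if
`d ≡ 1 (mod p-1)` and `gcd(d, p^n - 1) = 1`, every codeword `c_{a,b}` with
`b ≠ 0` has Hamming weight `(p-1)(p^n - W_d(c))/p` for some `c ∈ F_{p^n}`. -/
theorem cyclic_code_weight_walsh (p n : ℕ) [Fact p.Prime] (hn : 1 ≤ n)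
    (α : GaloisField p n) (hα : orderOf α = p ^ n - 1)
    (d : ℕ) (hd : 0 < d) (hgcd : Nat.gcd d (p ^ n - 1) = 1)
    (hcong : d % (p - 1) = 1 % (p - 1)) :
    ∀ a b : GaloisField p n, b ≠ 0 →
      ∃ c : GaloisField p n,
        (Nat.card {t : ℕ // t < p ^ n - 1 ∧
            Tr p n (a * α ^ t + b * α ^ (d * t)) ≠ 0} : ℂ)
          = (p - 1) * ((p : ℂ) ^ n
              - ∑ x : GaloisField p n, ew p (Tr p n (x ^ d - c * x))) / p := by
  intro a b hb
  have hq : Fintype.card (GaloisField p n) = p ^ n := by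
    rw [← Nat.card_eq_fintype_card, GaloisField.card p n (by omega)]
  obtain ⟨e, he⟩ := FiniteField.exists_pow_eq_of_coprime (hq ▸ hgcd) (Units.mk0 b hb)
  set c := -a / (e : GaloisField p n)
  set f : GaloisField p n → GaloisField p n := fun y ↦ y ^ d - c * y with hf
  have hcode (t : ℕ) : a * α ^ t + b * α ^ (d * t) = f (e * α ^ t) := by
    simp only [hf, c]
    rw [mul_pow, ← Units.val_pow_eq_pow_val, he, Units.val_mk0, pow_mul']
    field_simp
    ring
  have hf0 : ¬ Tr p n (f 0) ≠ 0 := by simp [hf, hd.ne', Tr]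
  have hhom (k : ZMod p) (hk : k ≠ 0) (y : GaloisField p n) : f (k • y) = k • f y :=
    smul_pow_sub_mul (FiniteField.pow_eq_self_of_modEq (by rwa [ZMod.card]) hk) _ y
  refine ⟨c, ?_⟩
  calc (Nat.card {t : ℕ // t < p ^ n - 1 ∧ Tr p n (a * α ^ t + b * α ^ (d * t)) ≠ 0} : ℂ)
      = Nat.card {y // Tr p n (f y) ≠ 0} := by
        simp only [hcode, ← hq]
        exact_mod_cast FiniteField.nat_card_mul_pow_of_orderOf_eq
          (P := fun y ↦ Tr p n (f y) ≠ 0) (hq ▸ hα) e.ne_zero hf0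
    _ = #{y | Tr p n (f y) ≠ 0} := by rw [Nat.card_eq_fintype_card, Fintype.card_subtype]
    _ = (p - 1) * ((p : ℂ) ^ n - ∑ y, ew p (Tr p n (f y))) / p := by
        simp only [ew_eq_stdAddChar]
        rw [AddChar.card_filter_ne_zero_eq_of_isPrimitive (ZMod.isPrimitive_stdAddChar p)
          (fun y ↦ Tr p n (f y))
          fun u hu ↦ sum_apply_mul_comp_eq_of_map_smul _ (Algebra.trace _ _) hhom hu,
          ZMod.card, hq, Nat.cast_pow]
end
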